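/- Let f satisfy the strong-convexity bound ⟪v, ∇²f(x) v⟫ ≥ k‖v‖² (k > 0). Suppose x : ℝ → ℝⁿ is differentiable at t with x'(t) = −∇f(x(t))/‖∇f(x(t))‖^{1/2} and ∇f(x(t)) ≠ 0. Then the function V ∘ x, where V(y) = ½‖∇f(y)‖², is differentiable at t and its derivative satisfies (V ∘ x)'(t) ≤ −k·2^{3/4}·(V(x(t)))^{3/4}. -/

import Mathlib

/-!
By the chain rule, `(V ∘ x)' = ⟪∇f(x), ∇²f(x) ẋ⟫ = -‖∇f(x)‖^{-1/2} ⟪∇f(x), ∇²f(x) ∇f(x)⟫`, which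
strong convexity bounds by `-k ‖∇f(x)‖^{3/2}`; and `‖g‖^{3/2} = 2^{3/4} (½‖g‖²)^{3/4}`.
-/

open scoped RealInnerProductSpace

section

variable {E : Type*} [NormedAddCommGroup E] [InnerProductSpace ℝ E]

theorem ContDiff.differentiable_gradient [CompleteSpace E] {f : E → ℝ} (hf : ContDiff ℝ 2 f) :
    Differentiable ℝ (gradient f) :=
  (InnerProductSpace.toDual ℝ E).symm.differentiable.comp
    ((hf.fderiv_right (by norm_num)).differentiable one_ne_zero)

theorem HasDerivAt.half_norm_sq {γ : ℝ → E} {γ' : E} {t : ℝ} (hγ : HasDerivAt γ γ' t) :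
    HasDerivAt (fun s => (1 / 2) * ‖γ s‖ ^ 2) ⟪γ t, γ'⟫ t :=
  (hγ.norm_sq.const_mul (1 / 2)).congr_deriv (by ring)

theorem inner_apply_neg_inv_sqrt_norm_smul_le {H : E →L[ℝ] E} {k : ℝ} {g : E}
    (hH : k * ‖g‖ ^ 2 ≤ ⟪g, H g⟫) :
    ⟪g, H (-(‖g‖ ^ ((1 : ℝ) / 2))⁻¹ • g)⟫ ≤ -(k * ‖g‖ ^ ((3 : ℝ) / 2)) := by
  have hscale : 0 ≤ (‖g‖ ^ ((1 : ℝ) / 2))⁻¹ := by positivity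
  have hpow : (‖g‖ ^ ((1 : ℝ) / 2))⁻¹ * ‖g‖ ^ 2 = ‖g‖ ^ ((3 : ℝ) / 2) := by
    rw [inv_mul_eq_div, ← Real.rpow_natCast, ← Real.rpow_sub' (norm_nonneg g) (by norm_num)]
    norm_num
  calc ⟪g, H (-(‖g‖ ^ ((1 : ℝ) / 2))⁻¹ • g)⟫
      = -((‖g‖ ^ ((1 : ℝ) / 2))⁻¹ * ⟪g, H g⟫) := by
        rw [map_smul, real_inner_smul_right, neg_mul]
    _ ≤ -((‖g‖ ^ ((1 : ℝ) / 2))⁻¹ * (k * ‖g‖ ^ 2)) :=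
        neg_le_neg (mul_le_mul_of_nonneg_left hH hscale)
    _ = -(k * ‖g‖ ^ ((3 : ℝ) / 2)) := by rw [mul_left_comm, hpow]

end

theorem Real.two_rpow_mul_half_mul_sq_rpow {r : ℝ} (hr : 0 ≤ r) :
    2 ^ ((3 : ℝ) / 4) * ((1 / 2) * r ^ 2) ^ ((3 : ℝ) / 4) = r ^ ((3 : ℝ) / 2) := by
  rw [← Real.mul_rpow (by norm_num) (by positivity), ← mul_assoc, mul_one_div_cancel two_ne_zero,
    one_mul, ← Real.rpow_natCast, ← Real.rpow_mul hr]
  norm_num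

theorem lyapunov_decrease_rescaled_flow_strong_convex_general
    {n : ℕ} (f : EuclideanSpace ℝ (Fin n) → ℝ) (hf : ContDiff ℝ 2 f)
    (k : ℝ)
    (hconv : ∀ x v : EuclideanSpace ℝ (Fin n),
      k * ‖v‖ ^ 2 ≤ ⟪v, fderiv ℝ (gradient f) x v⟫)
    (x : ℝ → EuclideanSpace ℝ (Fin n)) (t : ℝ)
    (hx : HasDerivAt x
      (-(‖gradient f (x t)‖ ^ ((1 : ℝ) / 2))⁻¹ • gradient f (x t)) t) :
    ∃ d : ℝ, HasDerivAt (fun s => (1 / 2) * ‖gradient f (x s)‖ ^ 2) d t ∧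
      d ≤ -(k * 2 ^ ((3 : ℝ) / 4) * ((1 / 2) * ‖gradient f (x t)‖ ^ 2) ^ ((3 : ℝ) / 4)) := by
  have hgrad_flow := ((hf.differentiable_gradient (x t)).hasFDerivAt).comp_hasDerivAt t hx
  refine ⟨_, hgrad_flow.half_norm_sq, ?_⟩
  rw [mul_assoc, Real.two_rpow_mul_half_mul_sq_rpow (norm_nonneg _)]
  exact inner_apply_neg_inv_sqrt_norm_smul_le (hconv (x t) _)

/-- Lyapunov decrease for the rescaled gradient flow under strong convexity: along
`ẋ = −∇f(x)/‖∇f(x)‖^{1/2}` (at a point where `∇f(x(t)) ≠ 0`), the function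
`V(y) = ½‖∇f(y)‖²` satisfies `(V∘x)'(t) ≤ −k·2^{3/4}·V(x(t))^{3/4}`. -/
theorem lyapunov_decrease_rescaled_flow_strong_convex
    {n : ℕ} (f : EuclideanSpace ℝ (Fin n) → ℝ) (hf : ContDiff ℝ 2 f)
    (k : ℝ) (hk : 0 < k)
    (hconv : ∀ x v : EuclideanSpace ℝ (Fin n),
      k * ‖v‖ ^ 2 ≤ ⟪v, fderiv ℝ (gradient f) x v⟫)
    (x : ℝ → EuclideanSpace ℝ (Fin n)) (t : ℝ)
    (hx : HasDerivAt x
      (-(‖gradient f (x t)‖ ^ ((1 : ℝ) / 2))⁻¹ • gradient f (x t)) t)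
    (hne : gradient f (x t) ≠ 0) :
    ∃ d : ℝ, HasDerivAt (fun s => (1 / 2) * ‖gradient f (x s)‖ ^ 2) d t ∧
      d ≤ -(k * 2 ^ ((3 : ℝ) / 4) * ((1 / 2) * ‖gradient f (x t)‖ ^ 2) ^ ((3 : ℝ) / 4)) :=
  lyapunov_decrease_rescaled_flow_strong_convex_general f hf k hconv x t hx
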